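/- In the Gaussian simple mediation model with n ≥ 6, the third central moment of γ̂ = θ̂_x β̂_m conditional on x equals 6 θ_x β_m σ_u² / ((n-4) x'x); in particular the distribution of γ̂ is skewed (nonzero third central moment) if and only if θ_x β_m ≠ 0. -/

import Mathlib

/-!
`γ̂` is the product of two independent factors, `θ̂ₓ ~ N(θₓ, σᵥ²/x'x)` and `βₘ + c T` with
`T ~ t(ν)`, `ν = n - 2`, and both laws are symmetric about their means, so both factors have zero
third central moment. For independent `X`, `Y` the moments factor, `E (XY)ᵏ = E Xᵏ E Yᵏ`, and zero
skewness means `E X³ = m³ + 3 m Var X`; expanding `E (XY - E X E Y)³` then leaves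
`6 E X E Y Var X Var Y`. The remaining input is `Var T = ν / (ν - 2)`, which comes from
integrating `d/dt [t (1 + t²/ν)^(-(ν-1)/2)] = q - (ν-2)/ν t² q` over `ℝ`, where `q` is the
unnormalised t density.
-/

open MeasureTheory ProbabilityTheory Real

/-- Density of the Student t distribution with `ν` degrees of freedom. -/
noncomputable def tPdf (ν t : ℝ) : ℝ :=
  Real.Gamma ((ν + 1) / 2) / (Real.sqrt (π * ν) * Real.Gamma (ν / 2)) *
    (1 + t ^ 2 / ν) ^ (-(ν + 1) / 2)

/-- Standard Student t distribution with `ν` degrees of freedom. -/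
noncomputable def tMeasure (ν : ℝ) : Measure ℝ :=
  volume.withDensity (fun t => ENNReal.ofReal (tPdf ν t))

open scoped NNReal

lemma Function.Odd.integral_eq_zero {G : Type*} [MeasurableSpace G] [AddGroup G]
    [MeasurableNeg G] {f : G → ℝ} (hf : f.Odd) (μ : Measure G) [μ.IsNegInvariant] :
    ∫ x, f x ∂μ = 0 := by
  have h := integral_neg_eq_self f μ
  simp_rw [hf.eq, integral_neg] at h
  exact neg_eq_self.mp h

lemma MeasureTheory.MemLp.integrable_pow_of_le {Ω : Type*} {mΩ : MeasurableSpace Ω}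
    {μ : Measure Ω} [IsFiniteMeasure μ] {X : Ω → ℝ} {p k : ℕ} (hX : MemLp X p μ) (hk : k ≤ p) :
    Integrable (X ^ k) μ := by
  refine (integrable_norm_iff (hX.1.pow k)).1 ?_
  simpa [norm_pow] using (hX.mono_exponent (by exact_mod_cast hk)).integrable_norm_pow'

namespace ProbabilityTheory

variable {Ω : Type*} {mΩ : MeasurableSpace Ω} {μ : Measure Ω} {X Y : Ω → ℝ}

lemma IndepFun.memLp_mul {p : ℕ} (h : X ⟂ᵢ[μ] Y) (hX : MemLp X p μ) (hY : MemLp Y p μ) :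
    MemLp (X * Y) p μ := by
  rcases eq_or_ne p 0 with rfl | hp
  · simpa using hX.1.mul hY.1
  refine (integrable_norm_rpow_iff (hX.1.mul hY.1) (by simpa using hp) (by simp)).1 ?_
  have := (h.comp (measurable_norm.pow_const p) (measurable_norm.pow_const p)).integrable_mul
    (hX.integrable_norm_pow hp) (hY.integrable_norm_pow hp)
  simpa [Function.comp_def, Pi.mul_def, mul_pow] using this

lemma IndepFun.moment_mul (h : X ⟂ᵢ[μ] Y) (hX : AEMeasurable X μ) (hY : AEMeasurable Y μ)
    (p : ℕ) : moment (X * Y) p μ = moment X p μ * moment Y p μ := by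
  rw [moment, moment, moment, mul_pow]
  exact (h.comp (measurable_id.pow_const p) (measurable_id.pow_const p)
    ).integral_mul_eq_mul_integral (hX.pow_const p).aestronglyMeasurable
      (hY.pow_const p).aestronglyMeasurable

lemma centralMoment_three_eq [IsProbabilityMeasure μ] (hX : MemLp X 3 μ) :
    centralMoment X 3 μ = moment X 3 μ - 3 * μ[X] * moment X 2 μ + 2 * μ[X] ^ 3 := by
  have h1 : Integrable (X ^ 1) μ := hX.integrable_pow_of_le (by norm_num)
  have h2 : Integrable (X ^ 2) μ := hX.integrable_pow_of_le (by norm_num)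
  have h3 : Integrable (X ^ 3) μ := hX.integrable_pow_of_le (by norm_num)
  have hexp : (X - fun _ => μ[X]) ^ 3
      = fun ω => (X ^ 3) ω - 3 * μ[X] * (X ^ 2) ω + 3 * μ[X] ^ 2 * (X ^ 1) ω - μ[X] ^ 3 := by
    ext ω; simp only [Pi.pow_apply, Pi.sub_apply]; ring
  rw [centralMoment, hexp, integral_sub, integral_add, integral_sub, integral_const_mul,
    integral_const_mul, integral_const, pow_one]
  · simp only [Pi.pow_apply, probReal_univ, smul_eq_mul, one_mul, moment]
    ring
  all_goals fun_prop

lemma centralMoment_const_add_const_mul [IsProbabilityMeasure μ] (hX : Integrable X μ)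
    (a c : ℝ) (p : ℕ) :
    centralMoment (fun ω => a + c * X ω) p μ = c ^ p * centralMoment X p μ := by
  have hmean : μ[fun ω => a + c * X ω] = a + c * μ[X] := by
    rw [integral_add (integrable_const a) (hX.const_mul c), integral_const, integral_const_mul]
    simp
  rw [centralMoment, centralMoment, hmean, ← integral_const_mul (c ^ p)]
  refine integral_congr_ae (ae_of_all _ fun ω => ?_)
  simp only [Pi.pow_apply, Pi.sub_apply, ← mul_pow]
  ring

theorem IndepFun.centralMoment_mul_three [IsProbabilityMeasure μ] (h : X ⟂ᵢ[μ] Y)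
    (hX : MemLp X 3 μ) (hY : MemLp Y 3 μ)
    (hX3 : centralMoment X 3 μ = 0) (hY3 : centralMoment Y 3 μ = 0) :
    centralMoment (X * Y) 3 μ = 6 * μ[X] * μ[Y] * Var[X; μ] * Var[Y; μ] := by
  have hXvar := variance_eq_sub (hX.mono_exponent (by norm_num))
  have hYvar := variance_eq_sub (hY.mono_exponent (by norm_num))
  rw [centralMoment_three_eq hX] at hX3
  rw [centralMoment_three_eq hY] at hY3
  rw [centralMoment_three_eq (h.memLp_mul hX hY), h.moment_mul hX.1.aemeasurable hY.1.aemeasurable,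
    h.moment_mul hX.1.aemeasurable hY.1.aemeasurable, h.integral_mul_eq_mul_integral hX.1 hY.1,
    hXvar, hYvar]
  simp only [moment] at *
  linear_combination μ[Y ^ 3] * hX3 + (3 * μ[X] * μ[X ^ 2] - 2 * μ[X] ^ 3) * hY3

lemma HasLaw.centralMoment_eq {ρ : Measure ℝ} (hX : HasLaw X ρ μ) (p : ℕ) :
    centralMoment X p μ = centralMoment id p ρ := by
  rw [centralMoment, centralMoment, hX.integral_eq]
  exact hX.integral_comp (f := fun x => (x - ∫ y, y ∂ρ) ^ p) (by fun_prop)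

instance (v : ℝ≥0) : (gaussianReal 0 v).IsNegInvariant :=
  ⟨(Measure.neg_def _).trans (by simpa using gaussianReal_map_neg (μ := 0) (v := v))⟩

lemma centralMoment_id_gaussianReal_of_odd (m : ℝ) (v : ℝ≥0) {k : ℕ} (hk : Odd k) :
    centralMoment id k (gaussianReal m v) = 0 := by
  rw [centralMoment]
  simp only [id, integral_id_gaussianReal]
  calc ∫ x, (x - m) ^ k ∂gaussianReal m v
      = ∫ x, x ^ k ∂(gaussianReal m v).map (· - m) :=
        (integral_map (measurable_sub_const m).aemeasurable
          (continuous_pow k).aestronglyMeasurable).symm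
    _ = 0 := by
        rw [gaussianReal_map_sub_const, sub_self]
        exact Function.Odd.integral_eq_zero (fun x => hk.neg_pow x) _

end ProbabilityTheory

section StudentT

variable {ν : ℝ}

lemma integrable_abs_pow_mul_one_add_sq_div_rpow (hν : 0 < ν) (k : ℕ) {r : ℝ}
    (hr : k / 2 + 1 ≤ r) : Integrable (fun t : ℝ => |t| ^ k * (1 + t ^ 2 / ν) ^ (-r)) := by
  have hpos : ∀ t : ℝ, 0 < 1 + t ^ 2 / ν := fun t => by positivity
  have hinv : Integrable (fun t : ℝ => (1 + t ^ 2 / ν)⁻¹) := by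
    convert (integrable_comp_mul_left_iff (fun x : ℝ => (1 + x ^ 2)⁻¹)
      (inv_ne_zero (sqrt_ne_zero'.2 hν))).2 integrable_inv_one_add_sq using 2 with t
    rw [mul_pow, inv_pow, sq_sqrt hν.le, div_eq_inv_mul]
  -- `|t|ᵏ ≤ (ν (1 + t²/ν))^(k/2)` reduces the integrand to a multiple of a Cauchy density
  refine (hinv.const_mul (ν ^ ((k : ℝ) / 2))).mono' (by fun_prop) (ae_of_all _ fun t => ?_)
  have habs : |t| ^ k = (t ^ 2) ^ ((k : ℝ) / 2) := by
    rw [← rpow_natCast, ← sqrt_sq_eq_abs, sqrt_eq_rpow, ← rpow_mul (sq_nonneg t)]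
    ring_nf
  have hsq : t ^ 2 ≤ ν * (1 + t ^ 2 / ν) := by
    rw [mul_add, mul_div_cancel₀ _ hν.ne']
    linarith
  calc ‖|t| ^ k * (1 + t ^ 2 / ν) ^ (-r)‖
      = |t| ^ k * (1 + t ^ 2 / ν) ^ (-r) := by
        rw [Real.norm_of_nonneg (by positivity)]
    _ ≤ (ν * (1 + t ^ 2 / ν)) ^ ((k : ℝ) / 2) * (1 + t ^ 2 / ν) ^ (-r) := by
        rw [habs]
        gcongr
    _ = ν ^ ((k : ℝ) / 2) * (1 + t ^ 2 / ν) ^ ((k : ℝ) / 2 + -r) := by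
        rw [mul_rpow hν.le (hpos t).le, rpow_add (hpos t), mul_assoc]
    _ ≤ ν ^ ((k : ℝ) / 2) * (1 + t ^ 2 / ν)⁻¹ := by
        rw [← rpow_neg_one]
        gcongr
        · exact le_add_of_nonneg_right (by positivity)
        · linarith

lemma integral_sq_mul_one_add_sq_div_rpow (hν : 4 ≤ ν) :
    ∫ t : ℝ, t ^ 2 * (1 + t ^ 2 / ν) ^ (-((ν + 1) / 2))
      = ν / (ν - 2) * ∫ t : ℝ, (1 + t ^ 2 / ν) ^ (-((ν + 1) / 2)) := by
  have hν0 : 0 < ν := by linarith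
  have hpos : ∀ t : ℝ, 0 < 1 + t ^ 2 / ν := fun t => by positivity
  set q : ℝ → ℝ := fun t => (1 + t ^ 2 / ν) ^ (-((ν + 1) / 2)) with hq_def
  have hq : Integrable q := by
    simpa using integrable_abs_pow_mul_one_add_sq_div_rpow hν0 0 (r := (ν + 1) / 2)
      (by push_cast; linarith)
  have hsq_q : Integrable fun t => t ^ 2 * q t := by
    simpa using integrable_abs_pow_mul_one_add_sq_div_rpow hν0 2 (r := (ν + 1) / 2)
      (by push_cast; linarith)
  have hF : Integrable fun t : ℝ => t * (1 + t ^ 2 / ν) ^ (-((ν - 1) / 2)) :=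
    (integrable_abs_pow_mul_one_add_sq_div_rpow hν0 1 (r := (ν - 1) / 2)
      (by push_cast; linarith)).mono' (by fun_prop) (ae_of_all _ fun t => by
        rw [norm_mul, Real.norm_eq_abs, Real.norm_of_nonneg (by positivity), pow_one])
  have hderiv : ∀ t : ℝ, HasDerivAt (fun t : ℝ => t * (1 + t ^ 2 / ν) ^ (-((ν - 1) / 2)))
      (q t - (ν - 2) / ν * (t ^ 2 * q t)) t := by
    intro t
    have h1 : HasDerivAt (fun t : ℝ => 1 + t ^ 2 / ν) (2 * t / ν) t := by
      simpa using ((hasDerivAt_pow 2 t).div_const ν).const_add 1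
    refine ((hasDerivAt_id t).mul
      (h1.rpow_const (p := -((ν - 1) / 2)) (Or.inl (hpos t).ne'))).congr_deriv ?_
    have hsplit : (1 + t ^ 2 / ν) ^ (-((ν - 1) / 2)) = (1 + t ^ 2 / ν) * q t := by
      rw [hq_def, ← rpow_one_add' (hpos t).le (by linarith)]
      ring_nf
    rw [hsplit, show -((ν - 1) / 2) - 1 = -((ν + 1) / 2) by ring]
    simp only [id, hq_def]
    field_simp
    ring
  have h0 := integral_eq_zero_of_hasDerivAt_of_integrable hderiv
    (hq.sub (hsq_q.const_mul _)) hF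
  rw [integral_sub hq (hsq_q.const_mul _), integral_const_mul, sub_eq_zero] at h0
  have hν2 : ν - 2 ≠ 0 := by linarith
  have hcancel : ν / (ν - 2) * ((ν - 2) / ν) = 1 := by field_simp
  rw [h0, ← mul_assoc, hcancel, one_mul]

lemma tPdf_eq_const_mul_rpow (ν t : ℝ) :
    tPdf ν t = Gamma ((ν + 1) / 2) / (sqrt (π * ν) * Gamma (ν / 2)) *
      (1 + t ^ 2 / ν) ^ (-((ν + 1) / 2)) := by
  rw [tPdf, neg_div]

lemma even_tPdf (ν : ℝ) : (tPdf ν).Even := fun t => by simp [tPdf]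

lemma measurable_tPdf (ν : ℝ) : Measurable (tPdf ν) := by
  unfold tPdf
  fun_prop

lemma tPdf_pos (hν : 0 < ν) (t : ℝ) : 0 < tPdf ν t := by
  have h1 : 0 < Gamma ((ν + 1) / 2) := Gamma_pos_of_pos (by positivity)
  have h2 : 0 < Gamma (ν / 2) := Gamma_pos_of_pos (by positivity)
  have h3 : 0 < (1 + t ^ 2 / ν) ^ (-(ν + 1) / 2) := rpow_pos_of_pos (by positivity) _
  unfold tPdf
  positivity

lemma tMeasure_ne_zero (hν : 0 < ν) : tMeasure ν ≠ 0 := by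
  rw [tMeasure, Ne, withDensity_eq_zero_iff (measurable_tPdf ν).ennreal_ofReal.aemeasurable]
  intro h
  obtain ⟨t, ht⟩ := h.exists
  simp only [Pi.zero_apply, ENNReal.ofReal_eq_zero] at ht
  exact (tPdf_pos hν t).not_ge ht

lemma integral_tMeasure (hν : 0 < ν) (g : ℝ → ℝ) :
    ∫ t, g t ∂tMeasure ν = ∫ t, tPdf ν t * g t := by
  rw [tMeasure, integral_withDensity_eq_integral_toReal_smul
    (measurable_tPdf ν).ennreal_ofReal (ae_of_all _ fun _ => ENNReal.ofReal_lt_top)]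
  simp_rw [ENNReal.toReal_ofReal (tPdf_pos hν _).le, smul_eq_mul]

lemma integrable_tMeasure_iff (hν : 0 < ν) {g : ℝ → ℝ} :
    Integrable g (tMeasure ν) ↔ Integrable fun t => tPdf ν t * g t := by
  rw [tMeasure, integrable_withDensity_iff_integrable_smul'
    (measurable_tPdf ν).ennreal_ofReal (ae_of_all _ fun _ => ENNReal.ofReal_lt_top)]
  simp_rw [ENNReal.toReal_ofReal (tPdf_pos hν _).le, smul_eq_mul]

lemma memLp_id_tMeasure {k : ℕ} (hk : k + 1 ≤ ν) : MemLp id k (tMeasure ν) := by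
  have hν : 0 < ν := by linarith [(k.cast_nonneg : (0 : ℝ) ≤ k)]
  rcases eq_or_ne k 0 with rfl | hk0
  · simpa using aestronglyMeasurable_id
  refine (integrable_norm_rpow_iff aestronglyMeasurable_id (by simpa using hk0) (by simp)).1 ?_
  simp only [ENNReal.toReal_natCast, rpow_natCast, id, Real.norm_eq_abs]
  rw [integrable_tMeasure_iff hν]
  refine ((integrable_abs_pow_mul_one_add_sq_div_rpow hν k (r := (ν + 1) / 2)
    (by linarith)).const_mul (Gamma ((ν + 1) / 2) / (sqrt (π * ν) * Gamma (ν / 2)))).congr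
    (ae_of_all _ fun t => ?_)
  simp only [tPdf_eq_const_mul_rpow]
  ring

lemma integral_pow_tMeasure_of_odd (hν : 0 < ν) {k : ℕ} (hk : Odd k) :
    ∫ t, t ^ k ∂tMeasure ν = 0 := by
  rw [integral_tMeasure hν]
  exact ((even_tPdf ν).mul_odd fun t => hk.neg_pow t).integral_eq_zero volume

lemma centralMoment_id_tMeasure_of_odd (hν : 0 < ν) {k : ℕ} (hk : Odd k) :
    centralMoment id k (tMeasure ν) = 0 := by
  have hmean : ∫ t, t ∂tMeasure ν = 0 := by
    simpa using integral_pow_tMeasure_of_odd hν odd_one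
  simp only [centralMoment, Pi.pow_apply, Pi.sub_apply, id, hmean, sub_zero]
  exact integral_pow_tMeasure_of_odd hν hk

lemma variance_id_tMeasure (hν : 4 ≤ ν) [IsProbabilityMeasure (tMeasure ν)] :
    Var[id; tMeasure ν] = ν / (ν - 2) := by
  have hν0 : 0 < ν := by linarith
  have hmean : ∫ t, id t ∂tMeasure ν = 0 := by
    simpa using integral_pow_tMeasure_of_odd hν0 odd_one
  have hmass : ∫ t, tPdf ν t = 1 := by
    simpa using (integral_tMeasure hν0 fun _ => 1).symm
  simp_rw [tPdf_eq_const_mul_rpow] at hmass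
  rw [integral_const_mul] at hmass
  rw [variance_eq_sub (memLp_id_tMeasure (by norm_num; linarith)), hmean, integral_tMeasure hν0]
  simp_rw [Pi.pow_apply, id, tPdf_eq_const_mul_rpow, mul_comm _ (_ ^ 2 : ℝ),
    mul_left_comm (_ ^ 2 : ℝ)]
  rw [integral_const_mul, integral_sq_mul_one_add_sq_div_rpow hν]
  linear_combination ν / (ν - 2) * hmass

end StudentT

namespace ProbabilityTheory

variable {Ω : Type*} {mΩ : MeasurableSpace Ω} {μ : Measure Ω} [IsProbabilityMeasure μ]
  {X T : Ω → ℝ} {m ν : ℝ} {v : ℝ≥0}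

theorem centralMoment_three_gaussianReal_mul_const_add_const_mul_tMeasure
    (hX : HasLaw X (gaussianReal m v) μ) (hT : HasLaw T (tMeasure ν) μ) (hXT : X ⟂ᵢ[μ] T)
    (hν : 4 ≤ ν) (a c : ℝ) :
    centralMoment (fun ω => X ω * (a + c * T ω)) 3 μ = 6 * m * a * v * (c ^ 2 * (ν / (ν - 2))) := by
  have : IsProbabilityMeasure (tMeasure ν) := hT.isProbabilityMeasure_iff.mp inferInstance
  have hXLp : MemLp X 3 μ := (hX.identDistrib HasLaw.id).memLp_iff.2 (memLp_id_gaussianReal 3)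
  have hTLp : MemLp T 3 μ :=
    (hT.identDistrib HasLaw.id).memLp_iff.2 (memLp_id_tMeasure (by norm_num; linarith))
  have hX3 : centralMoment X 3 μ = 0 := by
    rw [hX.centralMoment_eq, centralMoment_id_gaussianReal_of_odd _ _ (by decide)]
  set Y : Ω → ℝ := fun ω => a + c * T ω
  have hYLp : MemLp Y 3 μ := (memLp_const a).add (hTLp.const_mul c)
  have hY1 : μ[Y] = a := by
    have hT1 : μ[T] = 0 := by
      simpa [hT.integral_eq] using integral_pow_tMeasure_of_odd (by linarith) odd_one
    rw [integral_add (integrable_const a) ((hTLp.integrable (by norm_num)).const_mul c),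
      integral_const_mul, hT1]
    simp
  have hYvar : Var[Y; μ] = c ^ 2 * (ν / (ν - 2)) := by
    rw [variance_const_add (hTLp.1.const_mul c), variance_const_mul, hT.variance_eq,
      variance_id_tMeasure hν]
  have hY3 : centralMoment Y 3 μ = 0 := by
    rw [centralMoment_const_add_const_mul (hTLp.integrable (by norm_num)), hT.centralMoment_eq,
      centralMoment_id_tMeasure_of_odd (by linarith) (by decide), mul_zero]
  have hXY : X ⟂ᵢ[μ] Y := hXT.comp measurable_id (by fun_prop : Measurable fun t : ℝ => a + c * t)
  rw [show (fun ω => X ω * Y ω) = X * Y from rfl, hXY.centralMoment_mul_three hXLp hYLp hX3 hY3,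
    hX.integral_eq, integral_id_gaussianReal, hY1, hX.variance_eq, variance_id_gaussianReal, hYvar]

end ProbabilityTheory

/-- Third central moment of `γ̂ = θ̂ₓ β̂ₘ` equals `6 θₓ βₘ σᵤ²/((n-4) x'x)`; in
particular `γ̂` is skewed iff `θₓ βₘ ≠ 0`. -/
theorem stmt17 {Ω : Type*} [MeasurableSpace Ω] (Pr : Measure Ω) [IsProbabilityMeasure Pr]
    {n : ℕ} (hn : 6 ≤ n) (θx βm σu σv xx : ℝ) (hσu : 0 < σu) (hσv : 0 < σv)
    (hxx : 0 < xx)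
    (θhat T : Ω → ℝ)
    (hθ : Measure.map θhat Pr = gaussianReal θx (σv ^ 2 / xx).toNNReal)
    (hT : Measure.map T Pr = tMeasure ((n : ℝ) - 2))
    (hind : IndepFun θhat T Pr)
    (γhat : Ω → ℝ)
    (hγ : ∀ ω, γhat ω = θhat ω * (βm + σu / (σv * Real.sqrt ((n : ℝ) - 2)) * T ω)) :
    (∫ ω, (γhat ω - ∫ ω', γhat ω' ∂Pr) ^ 3 ∂Pr)
        = 6 * θx * βm * σu ^ 2 / (((n : ℝ) - 4) * xx)
      ∧ ((∫ ω, (γhat ω - ∫ ω', γhat ω' ∂Pr) ^ 3 ∂Pr) ≠ 0 ↔ θx * βm ≠ 0) := by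
  have hν : (4 : ℝ) ≤ (n : ℝ) - 2 := by
    have : (6 : ℝ) ≤ n := by exact_mod_cast hn
    linarith
  have hn4 : (0 : ℝ) < (n : ℝ) - 4 := by linarith
  have hθlaw : HasLaw θhat (gaussianReal θx (σv ^ 2 / xx).toNNReal) Pr :=
    ⟨.of_map_ne_zero (by rw [hθ]; exact IsProbabilityMeasure.ne_zero _), hθ⟩
  have hTlaw : HasLaw T (tMeasure ((n : ℝ) - 2)) Pr :=
    ⟨.of_map_ne_zero (by rw [hT]; exact tMeasure_ne_zero (by linarith)), hT⟩
  have hskew : centralMoment γhat 3 Pr = 6 * θx * βm * σu ^ 2 / (((n : ℝ) - 4) * xx) := by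
    rw [show γhat = fun ω => θhat ω * (βm + σu / (σv * √((n : ℝ) - 2)) * T ω) from funext hγ,
      centralMoment_three_gaussianReal_mul_const_add_const_mul_tMeasure hθlaw hTlaw hind hν,
      Real.coe_toNNReal _ (by positivity), div_pow, mul_pow, sq_sqrt (by linarith),
      show (n : ℝ) - 2 - 2 = n - 4 by ring]
    have : (n : ℝ) - 2 ≠ 0 := by linarith
    field_simp
  change centralMoment γhat 3 Pr = _ ∧ (centralMoment γhat 3 Pr ≠ 0 ↔ _)
  rw [hskew, show 6 * θx * βm * σu ^ 2 / (((n : ℝ) - 4) * xx)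
    = θx * βm * (6 * σu ^ 2 / (((n : ℝ) - 4) * xx)) by ring]
  exact ⟨rfl, mul_ne_zero_iff_right (by positivity)⟩
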